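/- arXiv:2007.01425 — 4 statements merged into one kernel-verified Lean document; each statement's English description precedes it below -/
import Mathlib

section
/- If A is an invertible 2×2 complex matrix with A² = -I, then for any 2×2 complex matrix B and any even natural number τ, the sum A·∑_{j=0}^{τ-1} (-1)^j A^j B A^j equals (τ/2)·(AB + BA). -/
open Matrix

noncomputable section

def σy : Matrix (Fin 2) (Fin 2) ℂ := !![0, -Complex.I; Complex.I, 0]
def σz : Matrix (Fin 2) (Fin 2) ℂ := !![1, 0; 0, -1]
def Rz (α : ℝ) : Matrix (Fin 2) (Fin 2) ℂ := NormedSpace.exp ((-(Complex.I * (α : ℂ) / 2)) • σz)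
def Ry (β : ℝ) : Matrix (Fin 2) (Fin 2) ℂ := NormedSpace.exp ((-(Complex.I * (β : ℂ) / 2)) • σy)

/-!
Since `A² = -1`, the summand `(-1)^j A^j B A^j` is 2-periodic in `j`, so the sum over `2m` terms is
`m (B - A B A)`; multiplying by `A` on the left turns `-A A B A` into `B A`.
-/

theorem Function.Periodic.sum_range_two_mul {M : Type*} [AddCommMonoid M] {f : ℕ → M}
    (hf : Function.Periodic f 2) (m : ℕ) :
    ∑ j ∈ Finset.range (2 * m), f j = m • (f 0 + f 1) := by
  induction m with
  | zero => simp
  | succ m ih =>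
    have h0 : f (2 * m) = f 0 := by simpa [mul_comm] using hf.nat_mul_eq m
    have h1 : f (2 * m + 1) = f 1 := by simpa [mul_comm, add_comm] using hf.nat_mul m 1
    rw [show 2 * (m + 1) = 2 * m + 1 + 1 by ring, Finset.sum_range_succ, Finset.sum_range_succ,
      add_assoc, ih, h0, h1, succ_nsmul]

section SquareRootOfMinusOne

variable {K R : Type*} [CommRing K] [Ring R] [Algebra K R] {A : R}

theorem periodic_neg_one_pow_smul_conj_pow (hA2 : A * A = -1) (B : R) :
    Function.Periodic (fun j : ℕ ↦ ((-1 : K) ^ j) • (A ^ j * B * A ^ j)) 2 := by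
  intro j
  have hpow : A ^ (j + 2) = -A ^ j := by rw [pow_add, sq, hA2, mul_neg_one]
  simp only [hpow, neg_mul, mul_neg, neg_neg, pow_add, neg_one_sq, mul_one]

theorem sum_range_two_mul_neg_one_pow_smul_conj_pow (hA2 : A * A = -1) (B : R) (m : ℕ) :
    ∑ j ∈ Finset.range (2 * m), ((-1 : K) ^ j) • (A ^ j * B * A ^ j) =
      m • (B - A * B * A) := by
  rw [(periodic_neg_one_pow_smul_conj_pow hA2 B).sum_range_two_mul]
  simp [sub_eq_add_neg]

theorem mul_sub_mul_mul_of_mul_self_eq_neg_one (hA2 : A * A = -1) (B : R) :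
    A * (B - A * B * A) = A * B + B * A := by
  rw [mul_sub, ← mul_assoc, ← mul_assoc, hA2, neg_one_mul, neg_mul, sub_neg_eq_add]

end SquareRootOfMinusOne

theorem stmt_1_general (A B : Matrix (Fin 2) (Fin 2) ℂ) (hA2 : A * A = -1)
    (τ : ℕ) (hτ : Even τ) :
    A * ∑ j ∈ Finset.range τ, ((-1 : ℂ) ^ j) • (A ^ j * B * A ^ j) =
      ((τ / 2 : ℕ) : ℂ) • (A * B + B * A) := by
  obtain ⟨m, rfl⟩ := hτ
  rw [← two_mul, sum_range_two_mul_neg_one_pow_smul_conj_pow hA2, mul_smul_comm,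
    mul_sub_mul_mul_of_mul_self_eq_neg_one hA2, Nat.mul_div_cancel_left m two_pos,
    Nat.cast_smul_eq_nsmul]

theorem stmt_1 (A B : Matrix (Fin 2) (Fin 2) ℂ) (hA : IsUnit A) (hA2 : A * A = -1)
    (τ : ℕ) (hτ : Even τ) :
    A * ∑ j ∈ Finset.range τ, ((-1 : ℂ) ^ j) • (A ^ j * B * A ^ j) =
      ((τ / 2 : ℕ) : ℂ) • (A * B + B * A) :=
  stmt_1_general A B hA2 τ hτ
end
end

section
/- There is no 2×2 unitary matrix of the form e^{iδ} R_z(ζ - 2k_x) R_y(θ_x) R_z(φ_x) R_z(ζ_y - 2k_y) R_y(θ_y) R_z(φ_y) that equals the identity for all (k_x, k_y) ∈ [-π, π]², for any fixed real parameters δ, ζ, θ_x, φ_x, ζ_y, θ_y, φ_y. Equivalently, the walk operator W(k_x, k_y) = e^{ik_xσ_z} C_x e^{ik_yσ_z} C_y cannot be identically equal to the identity as a function of (k_x, k_y). -/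
open Matrix

noncomputable section

/-! Shifting `k_x` by `π` flips the sign of the walk operator, since `e^{iπσ_z} = -1`:
`W(π, 0) = -W(0, 0)`, so `W` cannot be the identity at both points. -/

lemma σz_eq_diagonal : σz = diagonal ![1, -1] := by
  ext i j; fin_cases i <;> fin_cases j <;> simp [σz]

lemma exp_smul_σz (z : ℂ) :
    NormedSpace.exp (z • σz) = diagonal ![Complex.exp z, Complex.exp (-z)] := by
  rw [σz_eq_diagonal, ← diagonal_smul, exp_diagonal, Pi.exp_def, ← Complex.exp_eq_exp_ℂ]
  congr 1
  ext i; fin_cases i <;> simp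

lemma exp_pi_I_smul_σz : NormedSpace.exp ((Complex.I * Real.pi) • σz) = -1 := by
  rw [exp_smul_σz, mul_comm, Complex.exp_neg, Complex.exp_pi_mul_I]
  ext i j; fin_cases i <;> fin_cases j <;> simp

theorem stmt_8_general (Cx Cy : Matrix (Fin 2) (Fin 2) ℂ) :
    ¬ (∀ kx ∈ Set.Icc (-Real.pi) Real.pi, ∀ ky ∈ Set.Icc (-Real.pi) Real.pi,
        NormedSpace.exp ((Complex.I * (kx : ℂ)) • σz) * Cx *
          (NormedSpace.exp ((Complex.I * (ky : ℂ)) • σz) * Cy) = 1) := by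
  intro hW
  have hzero : (0 : ℝ) ∈ Set.Icc (-Real.pi) Real.pi := ⟨by linarith [Real.pi_pos], Real.pi_pos.le⟩
  have hpi : Real.pi ∈ Set.Icc (-Real.pi) Real.pi := ⟨by linarith [Real.pi_pos], le_rfl⟩
  have hW₀ : Cx * Cy = 1 := by simpa using hW 0 hzero 0 hzero
  have hWπ : -(Cx * Cy) = 1 := by
    simpa [exp_pi_I_smul_σz, mul_assoc] using hW Real.pi hpi 0 hzero
  rw [hW₀] at hWπ
  norm_num [← Matrix.ext_iff] at hWπ

theorem stmt_8 (Cx Cy : Matrix (Fin 2) (Fin 2) ℂ)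
    (hCx : Cx ∈ Matrix.unitaryGroup (Fin 2) ℂ) (hCy : Cy ∈ Matrix.unitaryGroup (Fin 2) ℂ) :
    ¬ (∀ kx ∈ Set.Icc (-Real.pi) Real.pi, ∀ ky ∈ Set.Icc (-Real.pi) Real.pi,
        NormedSpace.exp ((Complex.I * (kx : ℂ)) • σz) * Cx *
          (NormedSpace.exp ((Complex.I * (ky : ℂ)) • σz) * Cy) = 1) :=
  stmt_8_general Cx Cy
end
end

section
/- With R_z(α) = exp(-iασ_z/2), R_y(α) = exp(-iασ_y/2) and σ_y, σ_z Pauli matrices, let A_m = R_z(ζ'_m)R_y(θ_{0m})R_z(φ_m) for m ∈ {x, y}, where θ_{0x} = 2πm+νπ and θ_{0y} = 2πt+(1-ν)π with integers m, t and ν ∈ {0,1}; then for all real ζ'_x, ζ'_y, φ_x, φ_y the identity A_x A_y A_x σ_y R_z(-2ζ'_y) A_y = -R_z(-2φ_y)σ_y holds. -/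
open Matrix

noncomputable section

def Am (ζ θ φ : ℝ) : Matrix (Fin 2) (Fin 2) ℂ := Rz ζ * Ry θ * Rz φ

def Bm (ζ θ0 φ ζ1 θ1 φ1 : ℝ) : Matrix (Fin 2) (Fin 2) ℂ :=
  (ζ1 : ℂ) • (σz * Am ζ θ0 φ) + (θ1 : ℂ) • (σy * Rz (-(2 * ζ)) * Am ζ θ0 φ) +
    (φ1 : ℂ) • (Am ζ θ0 φ * σz)

lemma σz_diag : σz = Matrix.diagonal ![1, -1] := by
  ext i j; fin_cases i <;> fin_cases j <;> simp [σz, Matrix.diagonal]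

lemma Rz_eq (α : ℝ) :
    Rz α = !![Complex.exp (-(Complex.I * α / 2)), 0; 0, Complex.exp (Complex.I * α / 2)] := by
  rw [Rz, σz_diag]
  have : (-(Complex.I * (α:ℂ) / 2)) • Matrix.diagonal ![1, -1]
      = Matrix.diagonal ![-(Complex.I * α / 2), Complex.I * α / 2] := by
    ext i j; fin_cases i <;> fin_cases j <;> simp [Matrix.diagonal] <;> ring
  rw [this, Matrix.exp_diagonal]
  ext i j
  fin_cases i <;> fin_cases j <;>
    simp [Matrix.diagonal, ← Complex.exp_eq_exp_ℂ]

def S : Matrix (Fin 2) (Fin 2) ℂ := !![1, 1; Complex.I, -Complex.I]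

lemma S_mul_inv : S * !![1/2, -Complex.I/2; 1/2, Complex.I/2] = 1 := by
  ext i j; fin_cases i <;> fin_cases j <;>
    simp [S, Matrix.mul_apply, Fin.sum_univ_two, Matrix.one_apply] <;> ring_nf <;>
    simp [Complex.I_sq] <;> ring

lemma S_inv : S⁻¹ = !![1/2, -Complex.I/2; 1/2, Complex.I/2] :=
  Matrix.inv_eq_right_inv S_mul_inv

lemma S_unit : IsUnit S := by
  have := (Matrix.isUnit_iff_isUnit_det S).mpr (Matrix.isUnit_det_of_right_inverse S_mul_inv)  -- guess
  exact this

lemma σy_conj : σy = S * σz * S⁻¹ := by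
  rw [S_inv]
  ext i j; fin_cases i <;> fin_cases j <;>
    simp [σy, σz, S, Matrix.mul_apply, Fin.sum_univ_two] <;> ring_nf <;>
    simp [Complex.I_sq] <;> ring

lemma Ry_eq (β : ℝ) :
    Ry β = !![(Real.cos (β/2) : ℂ), -(Real.sin (β/2) : ℂ);
              (Real.sin (β/2) : ℂ), (Real.cos (β/2) : ℂ)] := by
  have h1 : (-(Complex.I * (β:ℂ) / 2)) • σy
      = S * ((-(Complex.I * (β:ℂ) / 2)) • σz) * S⁻¹ := by
    rw [Matrix.mul_smul, Matrix.smul_mul, ← σy_conj]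
  rw [Ry, h1, Matrix.exp_conj _ _ S_unit, show NormedSpace.exp ((-(Complex.I * (β:ℂ) / 2)) • σz) = _ from Rz_eq β, S_inv]
  have e1 : ((β/2 : ℝ) : ℂ) * Complex.I = Complex.I * β / 2 := by push_cast; ring
  have e2 : (-((β/2 : ℝ)) : ℂ) * Complex.I = -(Complex.I * β / 2) := by push_cast; ring
  have hc : (Real.cos (β/2) : ℂ)
      = (Complex.exp (Complex.I * β / 2) + Complex.exp (-(Complex.I * β / 2))) / 2 := by
    rw [Complex.ofReal_cos, Complex.cos, e1, e2]
  have hs : (Real.sin (β/2) : ℂ)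
      = (Complex.exp (-(Complex.I * β / 2)) - Complex.exp (Complex.I * β / 2)) * Complex.I / 2 := by
    rw [Complex.ofReal_sin, Complex.sin, e1, e2]
  ext i j
  fin_cases i <;> fin_cases j <;>
    simp [S, Matrix.mul_apply, Fin.sum_univ_two, hc, hs] <;>
    ring_nf <;> simp [Complex.I_sq] <;> ring_nf

def Jm : Matrix (Fin 2) (Fin 2) ℂ := !![0, -1; 1, 0]

lemma Ry_even (k : ℤ) : Ry (2 * Real.pi * k) = ((-1 : ℂ) ^ k) • (1 : Matrix (Fin 2) (Fin 2) ℂ) := by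
  rw [Ry_eq]
  have h : (2 * Real.pi * k) / 2 = k * Real.pi := by ring
  have hc : Real.cos ((2 * Real.pi * k) / 2) = (-1 : ℝ) ^ k := by
    rw [h]; simpa using Real.cos_add_int_mul_pi 0 k
  have hs : Real.sin ((2 * Real.pi * k) / 2) = 0 := by rw [h]; exact Real.sin_int_mul_pi k
  rw [hc, hs]
  ext i j
  fin_cases i <;> fin_cases j <;> simp [Matrix.one_apply] <;> push_cast <;> ring

lemma Ry_odd (k : ℤ) : Ry (2 * Real.pi * k + Real.pi) = ((-1 : ℂ) ^ k) • Jm := by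
  rw [Ry_eq]
  have h : (2 * Real.pi * k + Real.pi) / 2 = Real.pi / 2 + k * Real.pi := by ring
  have hc : Real.cos ((2 * Real.pi * k + Real.pi) / 2) = 0 := by
    rw [h, Real.cos_add_int_mul_pi, Real.cos_pi_div_two, mul_zero]
  have hs : Real.sin ((2 * Real.pi * k + Real.pi) / 2) = (-1 : ℝ) ^ k := by
    rw [h, Real.sin_add_int_mul_pi, Real.sin_pi_div_two, mul_one]
  rw [hc, hs]
  ext i j
  fin_cases i <;> fin_cases j <;> simp [Jm] <;> push_cast <;> ring

lemma neg_one_zpow_sq (k : ℤ) : ((-1 : ℂ) ^ k) * ((-1 : ℂ) ^ k) = 1 := by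
  rw [← zpow_add₀ (by norm_num : (-1 : ℂ) ≠ 0)]
  have : k + k = 2 * k := by ring
  rw [this, _root_.zpow_mul]
  norm_num

lemma key0 (sx sy : ℂ) (hx : sx * sx = 1) (hy : sy * sy = 1) (ζx ζy φx φy : ℝ) :
    (Rz ζx * (sx • 1) * Rz φx) * (Rz ζy * (sy • Jm) * Rz φy) * (Rz ζx * (sx • 1) * Rz φx) *
      (σy * Rz (-(2*ζy)) * (Rz ζy * (sy • Jm) * Rz φy)) = -(Rz (-(2*φy)) * σy) := by
  simp only [Rz_eq]
  ext i j
  fin_cases i <;> fin_cases j <;>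
    simp [Jm, σy, Matrix.mul_apply, Fin.sum_univ_two, ← Complex.exp_add] <;>
    ring_nf <;>
    simp [← Complex.exp_add, pow_two, hx, hy] <;>
    ring_nf <;>
    simp only [mul_assoc, ← Complex.exp_add] <;>
    ring_nf

lemma key1 (sx sy : ℂ) (hx : sx * sx = 1) (hy : sy * sy = 1) (ζx ζy φx φy : ℝ) :
    (Rz ζx * (sx • Jm) * Rz φx) * (Rz ζy * (sy • 1) * Rz φy) * (Rz ζx * (sx • Jm) * Rz φx) *
      (σy * Rz (-(2*ζy)) * (Rz ζy * (sy • 1) * Rz φy)) = -(Rz (-(2*φy)) * σy) := by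
  simp only [Rz_eq]
  ext i j
  fin_cases i <;> fin_cases j <;>
    simp [Jm, σy, Matrix.mul_apply, Fin.sum_univ_two, ← Complex.exp_add] <;>
    ring_nf <;>
    simp [← Complex.exp_add, pow_two, hx, hy] <;>
    ring_nf <;>
    simp only [mul_assoc, ← Complex.exp_add] <;>
    ring_nf

theorem stmt_11 (ν : ℕ) (hν : ν = 0 ∨ ν = 1) (m t : ℤ) (θ0x θ0y ζx ζy φx φy : ℝ)
    (hθx : θ0x = 2 * Real.pi * m + ν * Real.pi)
    (hθy : θ0y = 2 * Real.pi * t + (1 - (ν : ℝ)) * Real.pi) :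
    Am ζx θ0x φx * Am ζy θ0y φy * Am ζx θ0x φx * (σy * Rz (-(2 * ζy)) * Am ζy θ0y φy)
      = -(Rz (-(2 * φy)) * σy) := by
  rcases hν with h | h <;> subst h
  · have hx : θ0x = 2 * Real.pi * m := by rw [hθx]; push_cast; ring
    have hy : θ0y = 2 * Real.pi * t + Real.pi := by rw [hθy]; push_cast; ring
    rw [Am, Am, hx, hy, Ry_even, Ry_odd]
    exact key0 _ _ (neg_one_zpow_sq m) (neg_one_zpow_sq t) ζx ζy φx φy
  · have hx : θ0x = 2 * Real.pi * m + Real.pi := by rw [hθx]; push_cast; ring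
    have hy : θ0y = 2 * Real.pi * t := by rw [hθy]; push_cast; ring
    rw [Am, Am, hx, hy, Ry_odd, Ry_even]
    exact key1 _ _ (neg_one_zpow_sq m) (neg_one_zpow_sq t) ζx ζy φx φy
end
end

section
/- Let A = A_x A_y and B = A_x B_y + B_x A_y where B_m = ζ_{1m} σ_z A_m + θ_{1m} σ_y R_z(-2ζ'_m) A_m + φ_{1m} A_m σ_z, with A_m = R_z(ζ'_m)R_y(θ_{0m})R_z(φ_m). If θ_{0x} = 2πm + νπ and θ_{0y} = 2πt + (1-ν)π with ν ∈ {0,1}, then the anticommutator {A,B} = AB + BA is independent of ζ_{1x}, ζ_{1y}, φ_{1x}, φ_{1y}; i.e., the terms proportional to these parameters cancel in {A,B}. -/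
open Matrix

noncomputable section

/-! The Z-rotations commute with σz, while Ry(nπ) = cos(nπ/2) - i sin(nπ/2) σy is a multiple of
either 1 or σy, so σz A_x = ε A_x σz and σz A_y = -ε A_y σz with ε = ±1. Consequently σz
anticommutes with A = A_x A_y, and every ζ₁- or φ₁-term of B = A_x B_y + B_x A_y is a multiple
of σz A, whose anticommutator with A is (A σz + σz A) A = 0. -/

section SignedCommutation

variable {𝕜 R : Type*} [CommRing 𝕜] [Ring R] [Algebra 𝕜 R]

def anticomm (A B : R) : R := A * B + B * A

theorem anticomm_add_smul_mul {A S : R} (h : S * A = -(A * S)) (K : R) (c : 𝕜) :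
    anticomm A (K + c • (S * A)) = anticomm A K := by
  have hSA : A * (S * A) + S * A * A = 0 := by
    rw [← mul_assoc, ← add_mul, h, add_neg_cancel, zero_mul]
  calc anticomm A (K + c • (S * A))
      = anticomm A K + c • (A * (S * A) + S * A * A) := by
        simp only [anticomm, mul_add, add_mul, mul_smul_comm, smul_mul_assoc, smul_add]; abel
    _ = anticomm A K := by rw [hSA, smul_zero, add_zero]

theorem mul_anticomm_mul_of_signs {S X Y : R} {e : 𝕜} (he : e * e = 1)
    (hX : S * X = e • (X * S)) (hY : S * Y = -e • (Y * S)) : S * (X * Y) = -(X * Y * S) := by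
  rw [← mul_assoc, hX, smul_mul_assoc, mul_assoc, hY, mul_smul_comm, smul_smul, mul_neg, he,
    neg_one_smul, mul_assoc]

theorem mul_add_mul_eq_add_smul_of_signs {S X Y : R} {e : 𝕜} (he : e * e = 1)
    (hX : S * X = e • (X * S)) (hY : S * Y = -e • (Y * S)) (Cx Cy : R) (a b c d : 𝕜) :
    X * (a • (S * Y) + Cy + b • (Y * S)) + (c • (S * X) + Cx + d • (X * S)) * Y =
      (X * Cy + Cx * Y) + (a * e - b + c + d * e) • (S * (X * Y)) := by
  have hXS : X * S = e • (S * X) := by rw [hX, smul_smul, he, one_smul]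
  have hXSY : X * (S * Y) = e • (S * (X * Y)) := by
    rw [← mul_assoc, hXS, smul_mul_assoc, mul_assoc]
  have hXYS : X * (Y * S) = -(S * (X * Y)) := by
    rw [← mul_assoc, mul_anticomm_mul_of_signs he hX hY, neg_neg]
  simp only [mul_add, add_mul, mul_smul_comm, smul_mul_assoc, hXS, hXSY, hXYS, smul_smul,
    ← mul_assoc S]
  module

theorem anticomm_mul_eq_of_signs {S X Y : R} {e : 𝕜} (he : e * e = 1)
    (hX : S * X = e • (X * S)) (hY : S * Y = -e • (Y * S)) (Cx Cy : R) (a b c d : 𝕜) :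
    anticomm (X * Y) (X * (a • (S * Y) + Cy + b • (Y * S)) + (c • (S * X) + Cx + d • (X * S)) * Y) =
      anticomm (X * Y) (X * Cy + Cx * Y) := by
  rw [mul_add_mul_eq_add_smul_of_signs he hX hY]
  exact anticomm_add_smul_mul (mul_anticomm_mul_of_signs he hX hY) _ _

end SignedCommutation

section Pauli

open Complex

theorem σy_mul_σz : σy * σz = -(σz * σy) := by
  ext i j; fin_cases i <;> fin_cases j <;> simp [σy, σz]

def σyEigenbasis : (Matrix (Fin 2) (Fin 2) ℂ)ˣ where
  val := !![1, 1; I, -I]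
  inv := !![1 / 2, -I / 2; 1 / 2, I / 2]
  val_inv := by rw [Matrix.mul_fin_two, Matrix.one_fin_two]; ring_nf; norm_num
  inv_val := by rw [Matrix.mul_fin_two, Matrix.one_fin_two]; ring_nf; norm_num

theorem σy_eq_conj :
    σy = (σyEigenbasis : Matrix (Fin 2) (Fin 2) ℂ) * σz * (↑σyEigenbasis⁻¹ : Matrix (Fin 2) (Fin 2) ℂ) := by
  ext i j; fin_cases i <;> fin_cases j <;> simp [σy, σz, σyEigenbasis] <;> ring

theorem exp_smul_σz_s12 (c : ℂ) : NormedSpace.exp (c • σz) = cosh c • 1 + sinh c • σz := by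
  have : c • σz = Matrix.diagonal ![c, -c] := by
    ext i j; fin_cases i <;> fin_cases j <;> simp [σz]
  rw [this, Matrix.exp_diagonal]
  ext i j; fin_cases i <;> fin_cases j <;> simp [σz, ← Complex.exp_eq_exp_ℂ, cosh, sinh] <;> ring

theorem exp_smul_σy (c : ℂ) : NormedSpace.exp (c • σy) = cosh c • 1 + sinh c • σy := by
  have hconj : c • σy = (σyEigenbasis : Matrix (Fin 2) (Fin 2) ℂ) * (c • σz) *
      (↑σyEigenbasis⁻¹ : Matrix (Fin 2) (Fin 2) ℂ) := by
    rw [σy_eq_conj, ← smul_mul_assoc, ← mul_smul_comm]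
  rw [hconj, Matrix.exp_units_conj, exp_smul_σz_s12, σy_eq_conj]
  simp only [mul_add, add_mul, mul_smul_comm, smul_mul_assoc, mul_one, Units.mul_inv, mul_assoc]

theorem Ry_eq_s12 (β : ℝ) : Ry β = cos (β / 2) • 1 - (I * sin (β / 2)) • σy := by
  rw [Ry, exp_smul_σy, show -(I * β / 2) = -(β / 2 : ℂ) * I by ring, cosh_mul_I, sinh_mul_I,
    cos_neg, sin_neg]
  module

theorem σz_commute_Rz (α : ℝ) : Commute σz (Rz α) :=
  ((Commute.refl σz).smul_right _).exp_right

theorem σz_mul_Ry_int_mul_pi (n : ℤ) :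
    σz * Ry (n * Real.pi) = (-1 : ℂ) ^ n • (Ry (n * Real.pi) * σz) := by
  obtain ⟨j, rfl | rfl⟩ := Int.even_or_odd' n
  · have : sin ((↑(↑(2 * j) * Real.pi) : ℂ) / 2) = 0 := by
      rw [← sin_int_mul_pi j]; push_cast; ring_nf
    rw [Ry_eq_s12, this, _root_.zpow_mul]
    simp only [mul_zero, zero_smul, sub_zero, mul_smul_comm, smul_mul_assoc, mul_one, one_mul]
    norm_num
  · have : cos ((↑(↑(2 * j + 1) * Real.pi) : ℂ) / 2) = 0 := by
      rw [show ((↑(↑(2 * j + 1) * Real.pi) : ℂ) / 2) = j * Real.pi + Real.pi / 2 by push_cast; ring,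
        cos_add_pi_div_two, sin_int_mul_pi, neg_zero]
    rw [Ry_eq_s12, this, zpow_add₀ (by norm_num), _root_.zpow_mul]
    simp only [zero_smul, zero_sub, neg_mul, mul_neg, smul_mul_assoc, mul_smul_comm,
      σy_mul_σz]
    norm_num

theorem σz_mul_Am_int_mul_pi (ζ φ : ℝ) (n : ℤ) :
    σz * Am ζ (n * Real.pi) φ = (-1 : ℂ) ^ n • (Am ζ (n * Real.pi) φ * σz) := by
  rw [Am, mul_assoc, mul_assoc, ← mul_assoc σz, (σz_commute_Rz ζ).eq, mul_assoc,
    ← mul_assoc σz, σz_mul_Ry_int_mul_pi, smul_mul_assoc, mul_assoc, (σz_commute_Rz φ).eq]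
  simp only [mul_smul_comm, mul_assoc]

end Pauli

theorem stmt_12_general (ν : ℕ) (m t : ℤ) (θ0x θ0y ζx ζy φx φy θ1x θ1y : ℝ)
    (hθx : θ0x = 2 * Real.pi * m + ν * Real.pi)
    (hθy : θ0y = 2 * Real.pi * t + (1 - (ν : ℝ)) * Real.pi) :
    ∀ ζ1x ζ1y φ1x φ1y ζ1x' ζ1y' φ1x' φ1y' : ℝ,
      (Am ζx θ0x φx * Am ζy θ0y φy) *
          (Am ζx θ0x φx * Bm ζy θ0y φy ζ1y θ1y φ1y + Bm ζx θ0x φx ζ1x θ1x φ1x * Am ζy θ0y φy) +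
        (Am ζx θ0x φx * Bm ζy θ0y φy ζ1y θ1y φ1y + Bm ζx θ0x φx ζ1x θ1x φ1x * Am ζy θ0y φy) *
          (Am ζx θ0x φx * Am ζy θ0y φy)
      = (Am ζx θ0x φx * Am ζy θ0y φy) *
          (Am ζx θ0x φx * Bm ζy θ0y φy ζ1y' θ1y φ1y' + Bm ζx θ0x φx ζ1x' θ1x φ1x' * Am ζy θ0y φy) +
        (Am ζx θ0x φx * Bm ζy θ0y φy ζ1y' θ1y φ1y' + Bm ζx θ0x φx ζ1x' θ1x φ1x' * Am ζy θ0y φy) *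
          (Am ζx θ0x φx * Am ζy θ0y φy) := by
  intro ζ1x ζ1y φ1x φ1y ζ1x' ζ1y' φ1x' φ1y'
  have hθx' : θ0x = ((2 * m + ν : ℤ) : ℝ) * Real.pi := by rw [hθx]; push_cast; ring
  have hθy' : θ0y = ((2 * t + 1 - ν : ℤ) : ℝ) * Real.pi := by rw [hθy]; push_cast; ring
  have he : (-1 : ℂ) ^ (2 * m + ν) * (-1) ^ (2 * m + ν) = 1 := by
    rw [← zpow_add₀ (by norm_num)]; exact Even.neg_one_zpow ⟨_, rfl⟩
  have hsign : (-1 : ℂ) ^ (2 * t + 1 - ν) = -(-1) ^ (2 * m + ν) := by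
    rw [show 2 * t + 1 - (ν : ℤ) = (2 * m + ν) + 1 + 2 * (t - m - ν) by ring,
      zpow_add₀ (by norm_num), zpow_add₀ (by norm_num), _root_.zpow_mul]
    norm_num
  have hX := σz_mul_Am_int_mul_pi ζx φx (2 * m + ν)
  have hY := σz_mul_Am_int_mul_pi ζy φy (2 * t + 1 - ν)
  rw [← hθx'] at hX
  rw [← hθy', hsign] at hY
  exact (anticomm_mul_eq_of_signs he hX hY _ _ _ _ _ _).trans
    (anticomm_mul_eq_of_signs he hX hY _ _ _ _ _ _).symm

theorem stmt_12 (ν : ℕ) (hν : ν = 0 ∨ ν = 1) (m t : ℤ) (θ0x θ0y ζx ζy φx φy θ1x θ1y : ℝ)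
    (hθx : θ0x = 2 * Real.pi * m + ν * Real.pi)
    (hθy : θ0y = 2 * Real.pi * t + (1 - (ν : ℝ)) * Real.pi) :
    ∀ ζ1x ζ1y φ1x φ1y ζ1x' ζ1y' φ1x' φ1y' : ℝ,
      (Am ζx θ0x φx * Am ζy θ0y φy) *
          (Am ζx θ0x φx * Bm ζy θ0y φy ζ1y θ1y φ1y + Bm ζx θ0x φx ζ1x θ1x φ1x * Am ζy θ0y φy) +
        (Am ζx θ0x φx * Bm ζy θ0y φy ζ1y θ1y φ1y + Bm ζx θ0x φx ζ1x θ1x φ1x * Am ζy θ0y φy) *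
          (Am ζx θ0x φx * Am ζy θ0y φy)
      = (Am ζx θ0x φx * Am ζy θ0y φy) *
          (Am ζx θ0x φx * Bm ζy θ0y φy ζ1y' θ1y φ1y' + Bm ζx θ0x φx ζ1x' θ1x φ1x' * Am ζy θ0y φy) +
        (Am ζx θ0x φx * Bm ζy θ0y φy ζ1y' θ1y φ1y' + Bm ζx θ0x φx ζ1x' θ1x φ1x' * Am ζy θ0y φy) *
          (Am ζx θ0x φx * Am ζy θ0y φy) :=
  stmt_12_general ν m t θ0x θ0y ζx ζy φx φy θ1x θ1y hθx hθy
end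
end
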